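/- arXiv:1905.05371 — 2 statements merged into one kernel-verified Lean document; each statement's English description precedes it below -/
import Mathlib

section
/- For the fractional kernel K(t) = t^{H-1/2}/Γ(H+1/2) with H ∈ (0,1/2], for every T < ∞ and small h > 0 one has ∫₀ᵀ (K(t+h) - K(t))² dt = O(h^{2H}). -/
open MeasureTheory Set Asymptotics Filter

/-- Bernoulli's inequality for exponents in `[-1, 0]`. -/
private lemma bernoulli_neg {x a : ℝ} (hx : 0 ≤ x) (h1 : -1 ≤ a) (h2 : a ≤ 0) :
    1 + a * x ≤ (1 + x) ^ a := by
  have hx1 : (0:ℝ) < 1 + x := by linarith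
  have h3 : (1 + x) ^ (-a) ≤ 1 + (-a) * x :=
    rpow_one_add_le_one_add_mul_self (by linarith) (by linarith) (by linarith)
  have hpos : (0:ℝ) < (1 + x) ^ (-a) := Real.rpow_pos_of_pos hx1 _
  rcases le_or_gt (1 + a * x) 0 with hc | hc
  · exact hc.trans (Real.rpow_pos_of_pos hx1 _).le
  · have h4 : (1 + a * x) * ((1 + x) ^ (-a)) ≤ 1 := by
      calc (1 + a * x) * ((1 + x) ^ (-a)) ≤ (1 + a * x) * (1 + (-a) * x) :=
            mul_le_mul_of_nonneg_left h3 hc.le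
        _ ≤ 1 := by nlinarith [sq_nonneg (a*x)]
    have h5 : (1 + x) ^ a * ((1 + x) ^ (-a)) = 1 := by
      rw [← Real.rpow_add hx1]; simp
    have := h4.trans_eq h5.symm
    exact le_of_mul_le_mul_right this hpos

/-- For the fractional kernel `K(t) = t^(H-1/2)/Γ(H+1/2)` with `H ∈ (0,1/2]` and fixed `T < ∞`,
`∫₀ᵀ (K(t+h) - K(t))² dt = O(h^(2H))` as `h → 0⁺`. -/
theorem fractional_kernel_shift_estimate (H : ℝ) (hH : H ∈ Set.Ioc (0:ℝ) (1/2))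
    (T : ℝ) (hT : 0 < T) :
    (fun h : ℝ => ∫ t in (0:ℝ)..T,
        ((t + h) ^ (H - 1/2) / Real.Gamma (H + 1/2) - t ^ (H - 1/2) / Real.Gamma (H + 1/2))^2)
      =O[nhdsWithin 0 (Set.Ioi 0)] fun h => h ^ (2*H) := by
  obtain ⟨hH0, hH2⟩ := hH
  set α : ℝ := H - 1/2 with hα
  have hα0 : α ≤ 0 := by rw [hα]; linarith
  have hα1 : (-1:ℝ)/2 < α := by rw [hα]; linarith
  have hG : 0 < Real.Gamma (H + 1/2) := Real.Gamma_pos_of_pos (by linarith)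
  set G : ℝ := Real.Gamma (H + 1/2) with hGdef
  rw [isBigO_iff]
  refine ⟨(1/(2*H) + α^2/(2-2*H)) / G^2, ?_⟩
  filter_upwards [Ioc_mem_nhdsGT hT] with h hh
  obtain ⟨hh0, hhT⟩ := hh
  -- the unnormalized integrand
  set D : ℝ → ℝ := fun t => ((t + h) ^ α - t ^ α)^2 with hD
  have hmeas : Measurable D := by
    rw [hD]; fun_prop
  -- squares of rpow
  have sq_rpow : ∀ (t : ℝ), 0 ≤ t → ∀ b : ℝ, (t ^ b)^2 = t ^ (2*b) := by
    intro t ht b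
    rw [show (2:ℝ)*b = b*2 by ring, Real.rpow_mul ht, ← Real.rpow_natCast (t ^ b) 2]
    norm_num
  -- pointwise bound on (0, T]
  have key1 : ∀ t : ℝ, 0 < t → D t ≤ t ^ (2*α) := by
    intro t ht
    have hle : (t + h) ^ α ≤ t ^ α :=
      Real.rpow_le_rpow_of_nonpos ht (by linarith) hα0
    have hnn : 0 ≤ (t + h) ^ α := Real.rpow_nonneg (by linarith) _
    have : D t ≤ (t ^ α)^2 := by
      simp only [hD]
      nlinarith [mul_nonneg hnn (by linarith : 0 ≤ 2 * t ^ α - (t + h) ^ α)]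
    rwa [sq_rpow t ht.le α] at this
  -- pointwise bound on (h, T]
  have key2 : ∀ t : ℝ, h ≤ t → D t ≤ α^2 * h^2 * t ^ (2*α-2) := by
    intro t ht
    have ht0 : 0 < t := lt_of_lt_of_le hh0 ht
    have hx : 0 ≤ h / t := div_nonneg hh0.le ht0.le
    have hαm1 : (-1:ℝ) ≤ α := by rw [hα]; linarith
    have hb : 1 + α * (h/t) ≤ (1 + h/t) ^ α := bernoulli_neg hx hαm1 hα0
    have hsplit : (t + h) ^ α = t ^ α * (1 + h/t) ^ α := by
      rw [← Real.mul_rpow ht0.le (by positivity)]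
      congr 1
      field_simp
    have hta : 0 ≤ t ^ α := Real.rpow_nonneg ht0.le _
    have hmain : t ^ α - (t + h) ^ α ≤ -α * h * t ^ (α - 1) := by
      have h6 : t ^ α - (t + h) ^ α ≤ t ^ α * (-α * (h/t)) := by
        rw [hsplit]
        have := mul_le_mul_of_nonneg_left hb hta
        nlinarith
      have h7 : t ^ α * (-α * (h/t)) = -α * h * t ^ (α - 1) := by
        rw [show t ^ (α - 1) = t ^ α / t ^ (1:ℝ) from Real.rpow_sub ht0 α 1,
          Real.rpow_one]
        ring
      exact h6.trans (le_of_eq h7)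
    have hnonneg : 0 ≤ t ^ α - (t + h) ^ α := by
      have := Real.rpow_le_rpow_of_nonpos ht0 (by linarith : t ≤ t + h) hα0
      linarith
    have hsq : (t ^ α - (t + h) ^ α)^2 ≤ (-α * h * t ^ (α - 1))^2 :=
      pow_le_pow_left₀ hnonneg hmain 2
    have : D t = (t ^ α - (t + h) ^ α)^2 := by simp only [hD]; ring
    rw [this]
    refine hsq.trans (le_of_eq ?_)
    have := sq_rpow t ht0.le (α - 1)
    rw [mul_pow, mul_pow, this, show (2:ℝ)*(α-1) = 2*α-2 by ring]
    ring
  -- integrability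
  have Irpow : ∀ a b : ℝ, IntervalIntegrable (fun t => t ^ (2*α)) volume a b :=
    fun a b => intervalIntegral.intervalIntegrable_rpow' (by rw [hα]; linarith)
  have hIoc : Set.uIoc (0:ℝ) T = Set.Ioc 0 T := Set.uIoc_of_le hT.le
  have ID : IntervalIntegrable D volume 0 T := by
    rw [intervalIntegrable_iff, hIoc]
    refine Integrable.mono' ((intervalIntegrable_iff.mp (Irpow 0 T)).mono_set
      (by rw [hIoc])) hmeas.aestronglyMeasurable ?_
    refine (ae_restrict_iff' measurableSet_Ioc).2 (.of_forall fun t ht => ?_)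
    rw [Real.norm_eq_abs, abs_of_nonneg (sq_nonneg _)]
    exact key1 t ht.1
  have ID1 : IntervalIntegrable D volume 0 h :=
    ID.mono_set (by
      rw [Set.uIcc_of_le hT.le, Set.uIcc_of_le hh0.le]
      exact Set.Icc_subset_Icc le_rfl hhT)
  have ID2 : IntervalIntegrable D volume h T :=
    ID.mono_set (by
      rw [Set.uIcc_of_le hT.le, Set.uIcc_of_le hhT]
      exact Set.Icc_subset_Icc hh0.le le_rfl)
  have Ib2 : IntervalIntegrable (fun t => α^2 * h^2 * t ^ (2*α-2)) volume h T := by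
    apply ContinuousOn.intervalIntegrable
    apply ContinuousOn.const_smul (c := α^2 * h^2) ?_ |>.congr (fun x _ => rfl)
    exact fun x hx => (Real.continuousAt_rpow_const x _ (Or.inl (by
      rw [Set.uIcc_of_le hhT] at hx
      exact ne_of_gt (lt_of_lt_of_le hh0 hx.1)))).continuousWithinAt
  -- a.e. nonzero
  have ae_ne : ∀ᵐ t : ℝ, t ≠ 0 := by
    rw [ae_iff]
    simp only [not_not, Set.setOf_eq_eq_singleton]
    exact Real.volume_singleton
  -- bound the first piece
  have piece1 : (∫ t in (0:ℝ)..h, D t) ≤ h ^ (2*H) / (2*H) := by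
    have hmono : (∫ t in (0:ℝ)..h, D t) ≤ ∫ t in (0:ℝ)..h, t ^ (2*α) := by
      refine intervalIntegral.integral_mono_ae_restrict hh0.le ID1 (Irpow 0 h) ?_
      filter_upwards [ae_restrict_mem measurableSet_Icc, ae_restrict_of_ae ae_ne]
        with t ht htne
      exact key1 t (lt_of_le_of_ne ht.1 (Ne.symm htne))
    have hcomp : (∫ t in (0:ℝ)..h, t ^ (2*α)) = h ^ (2*H) / (2*H) := by
      rw [integral_rpow (Or.inl (by rw [hα]; linarith))]
      rw [Real.zero_rpow (by rw [hα]; intro hc; linarith : 2*α + 1 ≠ 0)]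
      rw [show 2*α + 1 = 2*H by rw [hα]; ring]
      ring
    linarith [hmono, hcomp.le, hcomp.ge]
  -- bound the second piece
  have piece2 : (∫ t in h..T, D t) ≤ α^2 / (2-2*H) * h ^ (2*H) := by
    have hmono : (∫ t in h..T, D t) ≤ ∫ t in h..T, α^2 * h^2 * t ^ (2*α-2) := by
      refine intervalIntegral.integral_mono_ae_restrict hhT ID2 Ib2 ?_
      filter_upwards [ae_restrict_mem measurableSet_Icc] with t ht
      exact key2 t ht.1
    have hcomp : (∫ t in h..T, α^2 * h^2 * t ^ (2*α-2))
        = α^2 * h^2 * ((T ^ (2*α - 1) - h ^ (2*α - 1)) / (2*α - 1)) := by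
      rw [intervalIntegral.integral_const_mul, integral_rpow (Or.inr ⟨by rw [hα]; intro hc; linarith,
        Set.notMem_uIcc_of_lt hh0 hT⟩)]
      rw [show 2*α - 2 + 1 = 2*α - 1 by ring]
    have hTpow : 0 ≤ T ^ (2*α - 1) := Real.rpow_nonneg hT.le _
    have hhpow : 0 ≤ h ^ (2*α - 1) := Real.rpow_nonneg hh0.le _
    have hden : (0:ℝ) < 1 - 2*α := by rw [hα]; linarith
    have hstep : α^2 * h^2 * ((T ^ (2*α - 1) - h ^ (2*α - 1)) / (2*α - 1))
        ≤ α^2 * h^2 * (h ^ (2*α - 1) / (1 - 2*α)) := by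
      have : (T ^ (2*α - 1) - h ^ (2*α - 1)) / (2*α - 1)
          = (h ^ (2*α - 1) - T ^ (2*α - 1)) / (1 - 2*α) := by
        rw [show (2*α - 1) = -(1 - 2*α) by ring, div_neg, ← neg_div, neg_sub]
      rw [this]
      gcongr
      linarith
    have hfin : α^2 * h^2 * (h ^ (2*α - 1) / (1 - 2*α)) = α^2 / (2-2*H) * h ^ (2*H) := by
      have h2 : h^2 * h ^ (2*α - 1) = h ^ (2*H) := by
        rw [← Real.rpow_natCast h 2, ← Real.rpow_add hh0]
        congr 1
        rw [hα]; push_cast; ring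
      rw [show (1 - 2*α) = 2 - 2*H by rw [hα]; ring]
      field_simp
      rw [← h2]; ring
    calc (∫ t in h..T, D t) ≤ _ := hmono
      _ = _ := hcomp
      _ ≤ _ := hstep
      _ = _ := hfin
  -- assemble
  have hsplitI : (∫ t in (0:ℝ)..T, D t) = (∫ t in (0:ℝ)..h, D t) + ∫ t in h..T, D t :=
    (intervalIntegral.integral_add_adjacent_intervals ID1 ID2).symm
  have hDtot : (∫ t in (0:ℝ)..T, D t) ≤ (1/(2*H) + α^2/(2-2*H)) * h ^ (2*H) := by
    rw [hsplitI]
    have : h ^ (2*H) / (2*H) = 1/(2*H) * h ^ (2*H) := by ring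
    rw [add_mul]
    linarith [piece1, piece2, this.le, this.ge]
  -- relate to the original integrand
  have hfd : (∫ t in (0:ℝ)..T, ((t + h) ^ α / G - t ^ α / G)^2)
      = (∫ t in (0:ℝ)..T, D t) / G^2 := by
    rw [← intervalIntegral.integral_div]
    congr 1
    funext t
    rw [hD, div_sub_div_same, div_pow]
  have hnn : 0 ≤ ∫ t in (0:ℝ)..T, ((t + h) ^ α / G - t ^ α / G)^2 :=
    intervalIntegral.integral_nonneg hT.le (fun t _ => sq_nonneg _)
  rw [Real.norm_eq_abs, Real.norm_eq_abs, abs_of_nonneg hnn,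
    abs_of_nonneg (Real.rpow_nonneg hh0.le _), hfd]
  calc (∫ t in (0:ℝ)..T, D t) / G^2 ≤ ((1/(2*H) + α^2/(2-2*H)) * h ^ (2*H)) / G^2 := by
        gcongr
    _ = (1/(2*H) + α^2/(2-2*H)) / G^2 * h ^ (2*H) := by ring
end

section
/- Let λ > 0, let K be a locally integrable kernel with resolvent R_λ of λK satisfying λK*R_λ = R_λ*(λK) = λK - R_λ, and let ψ be a continuous solution on [0,T] of ψ(t) = ∫₀ᵗ K(t-s)[(σ²c/2c)ψ(s)² - λψ(s) + θ̃] ds, i.e., ψ = K*[(σ²/2)ψ² - λψ + θ̃] with θ̃ = γθ²/(2c(1-γ)). Then for all t ∈ [0,T]: ∫ₜᵀ [(cσ²/2)ψ(T-s)² + γθ²/(2(1-γ))] · (1/λ) R_λ(s-t) ds = c·ψ(T-t). -/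
open MeasureTheory Set

/-- Convolution of two functions on the half line: `(f*g)(t) = ∫₀ᵗ f(t-s) g(s) ds`. -/
noncomputable def conv (f g : ℝ → ℝ) (t : ℝ) : ℝ := ∫ s in (0:ℝ)..t, f (t - s) * g s

private lemma conv_comm (f g : ℝ → ℝ) (t : ℝ) : conv f g t = conv g f t := by
  unfold conv
  have h1 : ∀ s : ℝ, f (t - s) * g s = (fun x => f x * g (t - x)) (t - s) := by
    intro s; simp only [sub_sub_cancel]
  calc ∫ s in (0:ℝ)..t, f (t - s) * g s
      = ∫ s in (0:ℝ)..t, (fun x => f x * g (t - x)) (t - s) := by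
        exact intervalIntegral.integral_congr (fun s _ => h1 s)
    _ = ∫ x in t - t..t - 0, f x * g (t - x) :=
        intervalIntegral.integral_comp_sub_left (fun x => f x * g (t - x)) t
    _ = ∫ s in (0:ℝ)..t, g (t - s) * f s := by
        rw [sub_self, sub_zero]
        exact intervalIntegral.integral_congr (fun s _ => mul_comm _ _)

private lemma conv_congr {f f' g g' : ℝ → ℝ} {t : ℝ} (ht : 0 ≤ t)
    (hf : ∀ x ∈ Icc 0 t, f x = f' x) (hg : ∀ x ∈ Icc 0 t, g x = g' x) :
    conv f g t = conv f' g' t := by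
  unfold conv
  apply intervalIntegral.integral_congr
  intro x hx
  rw [uIcc_of_le ht] at hx
  show f (t - x) * g x = f' (t - x) * g' x
  rw [hf (t - x) ⟨by linarith [hx.2], by linarith [hx.1]⟩, hg x hx]

private lemma ae_comp_sub_left {f f' : ℝ → ℝ} (hf : f =ᵐ[volume] f') (c : ℝ) :
    (fun x => f (c - x)) =ᵐ[volume] (fun x => f' (c - x)) :=
  hf.comp_tendsto (le_of_eq (Measure.map_sub_left_ae volume c))

private lemma conv_congr_ae {f f' g g' : ℝ → ℝ} (t : ℝ)
    (hf : f =ᵐ[volume] f') (hg : g =ᵐ[volume] g') :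
    conv f g t = conv f' g' t := by
  unfold conv
  apply intervalIntegral.integral_congr_ae
  filter_upwards [ae_comp_sub_left hf t, hg] with x e1 e2 _
  rw [e1, e2]

/-- The Fubini interchange for the half-line convolution. -/
private lemma conv_fubini (u : ℝ) (hu : 0 ≤ u) (f g h : ℝ → ℝ)
    (hfi : Integrable f) (hgi : Integrable g)
    (hfm : StronglyMeasurable f) (hgm : StronglyMeasurable g) (hh : Continuous h) :
    ∫ s in (0:ℝ)..u, (∫ r in (0:ℝ)..(u - s), f (u - s - r) * h r) * g s
      = ∫ r in (0:ℝ)..u, (∫ s in (0:ℝ)..(u - r), f (u - r - s) * g s) * h r := by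
  obtain ⟨M, hM⟩ : ∃ M, ∀ x ∈ Icc (0:ℝ) u, ‖h x‖ ≤ M :=
    isCompact_Icc.exists_bound_of_continuousOn hh.continuousOn
  have hM0 : 0 ≤ M := le_trans (norm_nonneg _) (hM 0 ⟨le_refl _, hu⟩)
  set E : Set (ℝ × ℝ) := {p : ℝ × ℝ | 0 < p.2 ∧ p.2 ≤ u - p.1} with hE
  have hEm : MeasurableSet E := by
    apply MeasurableSet.inter
    · exact measurableSet_lt measurable_const measurable_snd
    · exact measurableSet_le measurable_snd (measurable_const.sub measurable_fst)
  set Φ : ℝ × ℝ → ℝ :=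
    E.indicator (fun p => f (u - p.1 - p.2) * h p.2 * g p.1) with hΦ
  have hΦval : ∀ p : ℝ × ℝ,
      Φ p = (Ioc (0:ℝ) (u - p.1)).indicator (fun r => f (u - p.1 - r) * h r) p.2 * g p.1 := by
    intro p
    by_cases hp : p.2 ∈ Ioc (0:ℝ) (u - p.1)
    · have hpE : p ∈ E := ⟨hp.1, hp.2⟩
      rw [hΦ, Set.indicator_of_mem hpE, Set.indicator_of_mem hp]
    · have hpE : p ∉ E := fun hm => hp ⟨hm.1, hm.2⟩
      rw [hΦ, Set.indicator_of_notMem hpE, Set.indicator_of_notMem hp, zero_mul]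
  have hΦm : StronglyMeasurable Φ := by
    apply StronglyMeasurable.indicator _ hEm
    apply Measurable.stronglyMeasurable
    exact ((hfm.measurable.comp ((measurable_const.sub measurable_fst).sub
      measurable_snd)).mul (hh.measurable.comp measurable_snd)).mul
      (hgm.measurable.comp measurable_fst)
  have hslice : ∀ s : ℝ, Integrable (fun r => Φ (s, r)) volume := by
    intro s
    have : (fun r => Φ (s, r)) =
        (fun r => (Ioc (0:ℝ) (u - s)).indicator (fun r => f (u - s - r) * h r) r * g s) := by
      funext r; exact hΦval (s, r)
    rw [this]
    apply Integrable.mul_const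
    rw [integrable_indicator_iff measurableSet_Ioc]
    apply IntegrableOn.mul_continuousOn_of_subset
      ((hfi.comp_sub_left (u - s)).integrableOn) hh.continuousOn
      measurableSet_Ioc isCompact_Icc Ioc_subset_Icc_self
  have hΦint : Integrable Φ ((volume.restrict (Ioc 0 u)).prod volume) := by
    rw [integrable_prod_iff hΦm.aestronglyMeasurable]
    constructor
    · exact Filter.Eventually.of_forall (fun s => hslice s)
    · apply Integrable.mono' (g := fun s => (M * ∫ x, ‖f x‖) * ‖g s‖)
      · exact ((hgi.norm.const_mul _).restrict)
      · exact (hΦm.norm.integral_prod_right').aestronglyMeasurable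
      · rw [ae_restrict_iff' measurableSet_Ioc]
        apply Filter.Eventually.of_forall
        intro s hs
        have hnn : 0 ≤ ∫ r, ‖Φ (s, r)‖ := integral_nonneg (fun r => norm_nonneg _)
        rw [Real.norm_of_nonneg hnn]
        have hdom : Integrable
            (fun r => (M * ‖g s‖) * (Ioc (0:ℝ) (u - s)).indicator
              (fun r => ‖f (u - s - r)‖) r) volume := by
          apply Integrable.const_mul
          rw [integrable_indicator_iff measurableSet_Ioc]
          exact (hfi.norm.comp_sub_left (u - s)).integrableOn
        have hptw : ∀ r : ℝ, ‖Φ (s, r)‖ ≤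
            (M * ‖g s‖) * (Ioc (0:ℝ) (u - s)).indicator (fun r => ‖f (u - s - r)‖) r := by
          intro r
          rw [hΦval (s, r)]
          by_cases hr : r ∈ Ioc (0:ℝ) (u - s)
          · rw [Set.indicator_of_mem hr, Set.indicator_of_mem hr, norm_mul, norm_mul]
            have hhr : ‖h r‖ ≤ M := by
              apply hM
              constructor
              · exact le_of_lt hr.1
              · have := hr.2; have := hs.1; linarith
            calc ‖f (u - s - r)‖ * ‖h r‖ * ‖g s‖
                ≤ ‖f (u - s - r)‖ * M * ‖g s‖ := by
                  apply mul_le_mul_of_nonneg_right _ (norm_nonneg _)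
                  exact mul_le_mul_of_nonneg_left hhr (norm_nonneg _)
              _ = M * ‖g s‖ * ‖f (u - s - r)‖ := by ring
          · rw [Set.indicator_of_notMem hr, Set.indicator_of_notMem hr, zero_mul,
              norm_zero, mul_zero]
        calc ∫ r, ‖Φ (s, r)‖
            ≤ ∫ r, (M * ‖g s‖) * (Ioc (0:ℝ) (u - s)).indicator
                (fun r => ‖f (u - s - r)‖) r :=
              integral_mono ((hslice s).norm) hdom hptw
          _ = (M * ‖g s‖) * ∫ r, (Ioc (0:ℝ) (u - s)).indicator
                (fun r => ‖f (u - s - r)‖) r := integral_const_mul _ _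
          _ ≤ (M * ‖g s‖) * ∫ r, ‖f (u - s - r)‖ := by
              apply mul_le_mul_of_nonneg_left _ (mul_nonneg hM0 (norm_nonneg _))
              rw [integral_indicator measurableSet_Ioc]
              exact setIntegral_le_integral (hfi.norm.comp_sub_left (u - s))
                (Filter.Eventually.of_forall (fun r => norm_nonneg _))
          _ = (M * ‖g s‖) * ∫ x, ‖f x‖ := by
              congr 1
              exact integral_sub_left_eq_self (fun x => ‖f x‖) volume (u - s)
          _ = (M * ∫ x, ‖f x‖) * ‖g s‖ := by ring
  -- left side equals iterated integral
  have hL : (∫ s in (0:ℝ)..u, (∫ r in (0:ℝ)..(u - s), f (u - s - r) * h r) * g s)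
      = ∫ s, (∫ r, Φ (s, r)) ∂(volume.restrict (Ioc 0 u)) := by
    rw [intervalIntegral.integral_of_le hu]
    apply setIntegral_congr_fun measurableSet_Ioc
    intro s hs
    show (∫ r in (0:ℝ)..(u - s), f (u - s - r) * h r) * g s = ∫ r, Φ (s, r)
    have h1 : (0:ℝ) ≤ u - s := by linarith [hs.2]
    have e1 : (∫ r, Φ (s, r))
        = ∫ r, (Ioc (0:ℝ) (u - s)).indicator (fun r => f (u - s - r) * h r) r * g s :=
      integral_congr_ae (Filter.Eventually.of_forall fun r => hΦval (s, r))
    rw [e1, integral_mul_const, integral_indicator measurableSet_Ioc,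
      ← intervalIntegral.integral_of_le h1]
  -- right side
  have hR : ∀ r : ℝ, (∫ s, Φ (s, r) ∂(volume.restrict (Ioc 0 u)))
      = (Ioc (0:ℝ) u).indicator
          (fun r => (∫ s in (0:ℝ)..(u - r), f (u - r - s) * g s) * h r) r := by
    intro r
    by_cases hr : r ∈ Ioc (0:ℝ) u
    · rw [Set.indicator_of_mem hr]
      have h2 : (0:ℝ) ≤ u - r := by linarith [hr.2]
      have heq : EqOn (fun s => Φ (s, r))
          (fun s => (Ioc (0:ℝ) (u - r)).indicator (fun s => f (u - r - s) * g s) s * h r)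
          (Ioc 0 u) := by
        intro s hs
        simp only
        rw [hΦval (s, r)]
        by_cases hsr : s ≤ u - r
        · have m1 : r ∈ Ioc (0:ℝ) (u - s) := ⟨hr.1, by linarith⟩
          have m2 : s ∈ Ioc (0:ℝ) (u - r) := ⟨hs.1, hsr⟩
          rw [Set.indicator_of_mem m1, Set.indicator_of_mem m2, sub_right_comm]
          ring
        · have m1 : r ∉ Ioc (0:ℝ) (u - s) := by
            intro hm; exact hsr (by linarith [hm.2])
          have m2 : s ∉ Ioc (0:ℝ) (u - r) := by
            intro hm; exact hsr hm.2
          rw [Set.indicator_of_notMem m1, Set.indicator_of_notMem m2, zero_mul, zero_mul]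
      have e2 : (∫ s in Ioc (0:ℝ) u, Φ (s, r))
          = ∫ s in Ioc (0:ℝ) u,
              (Ioc (0:ℝ) (u - r)).indicator (fun s => f (u - r - s) * g s) s * h r :=
        setIntegral_congr_fun measurableSet_Ioc heq
      rw [e2, integral_mul_const]
      congr 1
      rw [integral_indicator measurableSet_Ioc, Measure.restrict_restrict measurableSet_Ioc,
        Set.Ioc_inter_Ioc, sup_idem, min_eq_left (by linarith [hr.1] : u - r ≤ u),
        ← intervalIntegral.integral_of_le h2]
    · rw [Set.indicator_of_notMem hr]
      have heq : EqOn (fun s => Φ (s, r)) (fun _ => (0:ℝ)) (Ioc 0 u) := by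
        intro s hs
        simp only
        rw [hΦval (s, r)]
        have : r ∉ Ioc (0:ℝ) (u - s) := by
          intro hm
          apply hr
          exact ⟨hm.1, by linarith [hm.2, hs.1]⟩
        rw [Set.indicator_of_notMem this, zero_mul]
      have e2 : (∫ s in Ioc (0:ℝ) u, Φ (s, r)) = ∫ s in Ioc (0:ℝ) u, (0:ℝ) :=
        setIntegral_congr_fun measurableSet_Ioc heq
      rw [e2]
      simp
  calc (∫ s in (0:ℝ)..u, (∫ r in (0:ℝ)..(u - s), f (u - s - r) * h r) * g s)
      = ∫ s, (∫ r, Φ (s, r)) ∂(volume.restrict (Ioc 0 u)) := hL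
    _ = ∫ r, (∫ s, Φ (s, r) ∂(volume.restrict (Ioc 0 u))) := by
        apply integral_integral_swap
        exact hΦint
    _ = ∫ r, (Ioc (0:ℝ) u).indicator
          (fun r => (∫ s in (0:ℝ)..(u - r), f (u - r - s) * g s) * h r) r := by
        congr 1; funext r; exact hR r
    _ = ∫ r in (0:ℝ)..u, (∫ s in (0:ℝ)..(u - r), f (u - r - s) * g s) * h r := by
        rw [integral_indicator measurableSet_Ioc, ← intervalIntegral.integral_of_le hu]

/-- Abstract form of the key computation. -/
private lemma key_lemma (u lam : ℝ) (hu : 0 ≤ u) (hlam : lam ≠ 0)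
    (K R F ψ : ℝ → ℝ)
    (hKi : Integrable K) (hRi : Integrable R)
    (hKm : StronglyMeasurable K) (hRm : StronglyMeasurable R)
    (hF : Continuous F) (hψ : Continuous ψ)
    (hres : ∀ᵐ x ∂volume, x ∈ Icc (0:ℝ) u → conv K R x = K x - (1/lam) * R x)
    (hψK : ∀ t ∈ Icc (0:ℝ) u, ψ t = conv K F t) :
    conv (fun x => F x + lam * ψ x) R u = lam * ψ u := by
  have hRint : IntervalIntegrable R volume 0 u := hRi.intervalIntegrable
  have hFR : IntervalIntegrable (fun s => F (u - s) * R s) volume 0 u :=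
    hRint.continuousOn_mul ((hF.comp (continuous_const.sub continuous_id)).continuousOn)
  have hψR : IntervalIntegrable (fun s => ψ (u - s) * R s) volume 0 u :=
    hRint.continuousOn_mul ((hψ.comp (continuous_const.sub continuous_id)).continuousOn)
  -- split
  have step1 : conv (fun x => F x + lam * ψ x) R u
      = conv F R u + lam * ∫ s in (0:ℝ)..u, ψ (u - s) * R s := by
    unfold conv
    have hc1 : EqOn (fun s => (F (u - s) + lam * ψ (u - s)) * R s)
        (fun s => F (u - s) * R s + lam * (ψ (u - s) * R s)) (uIcc 0 u) := by
      intro s _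
      show (F (u - s) + lam * ψ (u - s)) * R s = F (u - s) * R s + lam * (ψ (u - s) * R s)
      ring
    rw [intervalIntegral.integral_congr hc1,
      intervalIntegral.integral_add hFR (hψR.const_mul lam),
      intervalIntegral.integral_const_mul]
  -- Fubini on ψ = K*F
  have step2 : (∫ s in (0:ℝ)..u, ψ (u - s) * R s)
      = ∫ r in (0:ℝ)..u, conv K R (u - r) * F r := by
    have e1 : (∫ s in (0:ℝ)..u, ψ (u - s) * R s)
        = ∫ s in (0:ℝ)..u, (∫ r in (0:ℝ)..(u - s), K (u - s - r) * F r) * R s := by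
      apply intervalIntegral.integral_congr
      intro s hs
      rw [uIcc_of_le hu] at hs
      show ψ (u - s) * R s = (∫ r in (0:ℝ)..(u - s), K (u - s - r) * F r) * R s
      rw [hψK (u - s) ⟨by linarith [hs.2], by linarith [hs.1]⟩]
      rfl
    rw [e1, conv_fubini u hu K R F hKi hRi hKm hRm hF]
    apply intervalIntegral.integral_congr
    intro r _
    show (∫ s in (0:ℝ)..(u - r), K (u - r - s) * R s) * F r = conv K R (u - r) * F r
    rfl
  -- use resolvent identity
  have step3 : (∫ r in (0:ℝ)..u, conv K R (u - r) * F r)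
      = ∫ r in (0:ℝ)..u, (K (u - r) - (1/lam) * R (u - r)) * F r := by
    apply intervalIntegral.integral_congr_ae
    have hres' : ∀ᵐ r ∂volume, (u - r) ∈ Icc (0:ℝ) u →
        conv K R (u - r) = K (u - r) - (1/lam) * R (u - r) :=
      Filter.Tendsto.eventually (le_of_eq (Measure.map_sub_left_ae volume u)) hres
    filter_upwards [hres'] with r hr hru
    rw [uIoc_of_le hu] at hru
    show conv K R (u - r) * F r = (K (u - r) - (1/lam) * R (u - r)) * F r
    rw [hr ⟨by linarith [hru.2], by linarith [hru.1]⟩]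
  have hKF : IntervalIntegrable (fun r => K (u - r) * F r) volume 0 u :=
    ((hKi.comp_sub_left u).intervalIntegrable).mul_continuousOn hF.continuousOn
  have hRF : IntervalIntegrable (fun r => R (u - r) * F r) volume 0 u :=
    ((hRi.comp_sub_left u).intervalIntegrable).mul_continuousOn hF.continuousOn
  have step4 : (∫ r in (0:ℝ)..u, (K (u - r) - (1/lam) * R (u - r)) * F r)
      = conv K F u - (1/lam) * conv R F u := by
    have hc2 : EqOn (fun r => (K (u - r) - (1/lam) * R (u - r)) * F r)
        (fun r => K (u - r) * F r - (1/lam) * (R (u - r) * F r)) (uIcc 0 u) := by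
      intro r _
      show (K (u - r) - (1/lam) * R (u - r)) * F r
          = K (u - r) * F r - (1/lam) * (R (u - r) * F r)
      ring
    rw [intervalIntegral.integral_congr hc2,
      intervalIntegral.integral_sub hKF (hRF.const_mul _),
      intervalIntegral.integral_const_mul]
    rfl
  have hψu : ψ u = conv K F u := hψK u ⟨hu, le_refl u⟩
  have hcomm : conv R F u = conv F R u := conv_comm R F u
  rw [step1, step2, step3, step4, hcomm, ← hψu]
  field_simp
  ring

/-- The key identity (3.18) of the paper: with `ψ` solving the Riccati–Volterra equation
and `R_lam` the resolvent of `λK`,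
`∫ₜᵀ [(cσ²/2)ψ(T-s)² + γθ²/(2(1-γ))] (1/λ) R_lam(s-t) ds = c ψ(T-t)`. -/
theorem riccati_resolvent_identity
    (γ θ σ ρ κ T : ℝ) (hγ : γ ∈ Ioo (0:ℝ) 1) (hθ : θ ≠ 0) (hσ : 0 < σ)
    (hρ : ρ ∈ Icc (-1:ℝ) 1) (hT : 0 < T)
    (c lam : ℝ) (hc : c = (1-γ)/(1-γ+γ*ρ^2)) (hlam : lam = κ - γ/(1-γ)*ρ*θ*σ)
    (hlampos : 0 < lam)
    (K Rlam : ℝ → ℝ)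
    (hK : LocallyIntegrableOn K (Ici 0)) (hR : LocallyIntegrableOn Rlam (Ici 0))
    (hres : ∀ t ≥ (0:ℝ),
      conv (fun s => lam * K s) Rlam t = lam * K t - Rlam t ∧
      conv Rlam (fun s => lam * K s) t = lam * K t - Rlam t)
    (ψ : ℝ → ℝ) (hψc : ContinuousOn ψ (Icc 0 T))
    (hψ : ∀ t ∈ Icc (0:ℝ) T,
      ψ t = conv K (fun s => σ^2/2 * ψ s^2 - lam * ψ s + γ*θ^2/(2*c*(1-γ))) t) :
    ∀ t ∈ Icc (0:ℝ) T,
      ∫ s in t..T, ((c*σ^2/2) * ψ (T-s)^2 + γ*θ^2/(2*(1-γ))) * ((1/lam) * Rlam (s-t))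
        = c * ψ (T-t) := by
  intro t ht
  set u := T - t with hud
  have hu : 0 ≤ u := by rw [hud]; linarith [ht.2]
  have huT : u ≤ T := by rw [hud]; linarith [ht.1]
  have hγ1 : γ < 1 := hγ.2
  have h1γ : (0:ℝ) < 1 - γ := by linarith
  have hcpos : 0 < c := by
    rw [hc]; apply div_pos h1γ; nlinarith [sq_nonneg ρ, hγ.1]
  have hcne : c ≠ 0 := ne_of_gt hcpos
  have hlamne : lam ≠ 0 := ne_of_gt hlampos
  set θt : ℝ := γ*θ^2/(2*c*(1-γ)) with hθt
  have hcθ : γ*θ^2/(2*(1-γ)) = c * θt := by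
    rw [hθt]; field_simp
  -- clamped continuous extension of ψ
  set ψb : ℝ → ℝ := fun x => ψ (max 0 (min x T)) with hψb
  have hψbc : Continuous ψb := by
    apply hψc.comp_continuous
      (continuous_const.max (continuous_id.min continuous_const))
    intro x
    exact ⟨le_max_left _ _, max_le (le_of_lt hT) (min_le_right _ _)⟩
  have hψbeq : ∀ x ∈ Icc (0:ℝ) T, ψb x = ψ x := by
    intro x hx
    rw [hψb]
    simp only
    rw [min_eq_left hx.2, max_eq_right hx.1]
  set Fb : ℝ → ℝ := fun x => σ^2/2 * ψb x^2 - lam * ψb x + θt with hFb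
  have hFbc : Continuous Fb := by
    rw [hFb]
    exact ((continuous_const.mul (hψbc.pow 2)).sub
      (continuous_const.mul hψbc)).add continuous_const
  -- measurable truncated kernels
  have hKT : IntegrableOn K (Icc 0 T) :=
    hK.integrableOn_compact_subset Icc_subset_Ici_self isCompact_Icc
  have hRT : IntegrableOn Rlam (Icc 0 T) :=
    hR.integrableOn_compact_subset Icc_subset_Ici_self isCompact_Icc
  set K' : ℝ → ℝ := (Icc (0:ℝ) T).indicator (hKT.aestronglyMeasurable.mk K) with hK'
  set R' : ℝ → ℝ := (Icc (0:ℝ) T).indicator (hRT.aestronglyMeasurable.mk Rlam) with hR'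
  have hK'm : StronglyMeasurable K' :=
    (hKT.aestronglyMeasurable.stronglyMeasurable_mk).indicator measurableSet_Icc
  have hR'm : StronglyMeasurable R' :=
    (hRT.aestronglyMeasurable.stronglyMeasurable_mk).indicator measurableSet_Icc
  have hK'ae : (Icc (0:ℝ) T).indicator K =ᵐ[volume] K' := by
    have h1 : ∀ᵐ x ∂volume, x ∈ Icc (0:ℝ) T → K x = hKT.aestronglyMeasurable.mk K x :=
      (ae_restrict_iff' measurableSet_Icc).1 hKT.aestronglyMeasurable.ae_eq_mk
    filter_upwards [h1] with x hx
    by_cases hmem : x ∈ Icc (0:ℝ) T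
    · rw [Set.indicator_of_mem hmem, hK', Set.indicator_of_mem hmem, hx hmem]
    · rw [Set.indicator_of_notMem hmem, hK', Set.indicator_of_notMem hmem]
  have hR'ae : (Icc (0:ℝ) T).indicator Rlam =ᵐ[volume] R' := by
    have h1 : ∀ᵐ x ∂volume, x ∈ Icc (0:ℝ) T → Rlam x = hRT.aestronglyMeasurable.mk Rlam x :=
      (ae_restrict_iff' measurableSet_Icc).1 hRT.aestronglyMeasurable.ae_eq_mk
    filter_upwards [h1] with x hx
    by_cases hmem : x ∈ Icc (0:ℝ) T
    · rw [Set.indicator_of_mem hmem, hR', Set.indicator_of_mem hmem, hx hmem]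
    · rw [Set.indicator_of_notMem hmem, hR', Set.indicator_of_notMem hmem]
  have hK'i : Integrable K' :=
    ((integrable_indicator_iff measurableSet_Icc).2 hKT).congr hK'ae
  have hR'i : Integrable R' :=
    ((integrable_indicator_iff measurableSet_Icc).2 hRT).congr hR'ae
  -- resolvent identity, divided by lam
  have hKR : ∀ x ∈ Icc (0:ℝ) T, conv K Rlam x = K x - (1/lam) * Rlam x := by
    intro x hx
    have h2 : conv (fun s => lam * K s) Rlam x = lam * conv K Rlam x := by
      unfold conv
      rw [← intervalIntegral.integral_const_mul]
      apply intervalIntegral.integral_congr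
      intro s _
      show lam * K (x - s) * Rlam s = lam * (K (x - s) * Rlam s)
      ring
    have h3 : lam * conv K Rlam x = lam * K x - Rlam x := by
      rw [← h2]; exact (hres x hx.1).1
    apply mul_left_cancel₀ hlamne
    rw [h3]
    field_simp
  -- transfer of resolvent identity to the truncations
  have hKRT : ∀ x ∈ Icc (0:ℝ) T, conv K' R' x = conv K Rlam x := by
    intro x hx
    have h1 : conv K' R' x
        = conv ((Icc (0:ℝ) T).indicator K) ((Icc (0:ℝ) T).indicator Rlam) x :=
      conv_congr_ae x hK'ae.symm hR'ae.symm
    rw [h1]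
    apply conv_congr hx.1
    · intro y hy
      exact Set.indicator_of_mem (show y ∈ Icc (0:ℝ) T from ⟨hy.1, le_trans hy.2 hx.2⟩) K
    · intro y hy
      exact Set.indicator_of_mem
        (show y ∈ Icc (0:ℝ) T from ⟨hy.1, le_trans hy.2 hx.2⟩) Rlam
  have hresae : ∀ᵐ x ∂volume, x ∈ Icc (0:ℝ) u → conv K' R' x = K' x - (1/lam) * R' x := by
    filter_upwards [hK'ae, hR'ae] with x e1 e2 hx
    have hxT : x ∈ Icc (0:ℝ) T := ⟨hx.1, le_trans hx.2 huT⟩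
    rw [hKRT x hxT, hKR x hxT, ← e1, ← e2, Set.indicator_of_mem hxT,
      Set.indicator_of_mem hxT]
  -- transfer of the Volterra equation
  have hψK' : ∀ x ∈ Icc (0:ℝ) u, ψb x = conv K' Fb x := by
    intro x hx
    have hxT : x ∈ Icc (0:ℝ) T := ⟨hx.1, le_trans hx.2 huT⟩
    rw [hψbeq x hxT, hψ x hxT]
    have h1 : conv K (fun s => σ^2/2 * ψ s^2 - lam * ψ s + θt) x
        = conv ((Icc (0:ℝ) T).indicator K) Fb x := by
      apply conv_congr hx.1
      · intro y hy
        exact (Set.indicator_of_mem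
          (show y ∈ Icc (0:ℝ) T from ⟨hy.1, le_trans hy.2 hxT.2⟩) K).symm
      · intro y hy
        have hyT : y ∈ Icc (0:ℝ) T := ⟨hy.1, le_trans hy.2 hxT.2⟩
        rw [hFb]
        simp only
        rw [hψbeq y hyT]
    rw [h1]
    exact conv_congr_ae x hK'ae Filter.EventuallyEq.rfl
  have hkey := key_lemma u lam hu hlamne K' R' Fb ψb hK'i hR'i hK'm hR'm hFbc hψbc
    hresae hψK'
  -- now transform the target integral
  have hshift : (∫ s in t..T, ((c*σ^2/2) * ψ (T-s)^2 + γ*θ^2/(2*(1-γ))) * ((1/lam) * Rlam (s-t)))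
      = ∫ x in (0:ℝ)..u,
          ((c*σ^2/2) * ψ (T-(x+t))^2 + γ*θ^2/(2*(1-γ))) * ((1/lam) * Rlam (x+t-t)) := by
    have h0 := intervalIntegral.integral_comp_add_right (a := (0:ℝ)) (b := u)
      (fun s => ((c*σ^2/2) * ψ (T-s)^2 + γ*θ^2/(2*(1-γ))) * ((1/lam) * Rlam (s-t))) t
    rw [zero_add, show u + t = T by rw [hud]; ring] at h0
    exact h0.symm
  have hstep : (∫ x in (0:ℝ)..u,
        ((c*σ^2/2) * ψ (T-(x+t))^2 + γ*θ^2/(2*(1-γ))) * ((1/lam) * Rlam (x+t-t)))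
      = (c/lam) * conv (fun x => Fb x + lam * ψb x) ((Icc (0:ℝ) T).indicator Rlam) u := by
    show _ = (c/lam) * ∫ x in (0:ℝ)..u,
        (Fb (u - x) + lam * ψb (u - x)) * (Icc (0:ℝ) T).indicator Rlam x
    rw [← intervalIntegral.integral_const_mul]
    apply intervalIntegral.integral_congr
    intro x hx
    rw [uIcc_of_le hu] at hx
    show ((c*σ^2/2) * ψ (T-(x+t))^2 + γ*θ^2/(2*(1-γ))) * ((1/lam) * Rlam (x+t-t))
        = (c/lam) * ((Fb (u - x) + lam * ψb (u - x)) * (Icc (0:ℝ) T).indicator Rlam x)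
    have e1 : T - (x + t) = u - x := by rw [hud]; ring
    have e2 : x + t - t = x := by ring
    have e3 : x ∈ Icc (0:ℝ) T := ⟨hx.1, le_trans hx.2 huT⟩
    have e4 : u - x ∈ Icc (0:ℝ) T := ⟨by linarith [hx.2], by linarith [hx.1, huT]⟩
    rw [e1, e2, Set.indicator_of_mem e3, hFb]
    simp only
    rw [hψbeq (u - x) e4, hcθ]
    field_simp
    ring
  have hconvR : conv (fun x => Fb x + lam * ψb x) ((Icc (0:ℝ) T).indicator Rlam) u
      = conv (fun x => Fb x + lam * ψb x) R' u :=
    conv_congr_ae u Filter.EventuallyEq.rfl hR'ae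
  rw [hshift, hstep, hconvR, hkey, hψbeq u ⟨hu, huT⟩]
  field_simp
end
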